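/- arXiv:2008.13236 — 9 statements merged into one kernel-verified Lean document; each statement's English description precedes it below -/
import Mathlib

section
/- Let a, b, c, d be four pairwise distinct complex numbers, and define p_ab = f(d,a,b,c), p_bc = f(a,b,c,d), p_cd = f(b,c,d,a), p_da = f(c,d,a,b), where f(a,b,c,d) = (c(b-a)√q + b(c-a))/((b-a)√q + (c-a)) with q = cr(c,a,b,d). Then cr(p_ab, p_bc, p_cd, p_da) = -1; in particular the four points p_ab, p_bc, p_cd, p_da lie on a common circle or line. -/
open Complex

/-- Complex cross-ratio. -/
noncomputable def crC (a b c d : ℂ) : ℂ := (a - b) * (c - d) / ((b - c) * (d - a))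

/-- Principal square root of the cross-ratio `cr(c,a,b,d)`. -/
noncomputable def sqrtQ (a b c d : ℂ) : ℂ := (crC c a b d) ^ ((1 : ℂ) / 2)

/-- The point-insertion rule. -/
noncomputable def fIns (a b c d : ℂ) : ℂ :=
  (c * (b - a) * sqrtQ a b c d + b * (c - a)) / ((b - a) * sqrtQ a b c d + (c - a))

/-!
Put `s = √cr(c,a,b,d)` and `t = √cr(b,d,a,c)`; by the symmetry of the cross-ratio, `p_bc` and
`p_da` are built from `s`, and `p_ab` and `p_cd` from `t`. Each difference of consecutive points
factors, and with `u = (a-d)(b-c)`, `v = (b-d)(a-c)`, `w = (a-b)(c-d)` one finds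
`cr(p_ab, p_bc, p_cd, p_da) = -w X² / (u Y²)`, where `X = ust + v(s+1)` and `Y = wst + v(t+1)`.
Since `ws² = v = ut²`, both `tX` and `sY` equal `v(st+s+t)`, hence `wX² = uY²`.

A real cross-ratio makes the doubled oriented angles `∡ p_ab p_bc p_cd` and `∡ p_ab p_da p_cd`
equal, and the converse of the inscribed angle theorem gives the circle or line.
-/

theorem crC_swap (a b c d : ℂ) : crC b a d c = crC a b c d := by
  rw [crC, crC]
  ring

theorem sqrtQ_rotate_two (a b c d : ℂ) : sqrtQ c d a b = sqrtQ a b c d := by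
  rw [sqrtQ, sqrtQ, crC_swap]

theorem mul_sqrtQ_sq {a b c d : ℂ} (hab : a ≠ b) (hcd : c ≠ d) :
    (a - b) * (c - d) * sqrtQ a b c d ^ 2 = (b - d) * (a - c) := by
  have hw : (a - b) * (d - c) ≠ 0 := mul_ne_zero (sub_ne_zero.2 hab) (sub_ne_zero.2 hcd.symm)
  have hsq : (crC c a b d ^ (2⁻¹ : ℂ)) ^ 2 = crC c a b d := mod_cast cpow_nat_inv_pow _ two_ne_zero
  rw [sqrtQ, one_div, hsq, crC]
  field_simp
  ring

-- `fIns a b c d = insPoint a b c (sqrtQ a b c d)`; only the square of the parameter matters below.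
noncomputable def insPoint (a b c s : ℂ) : ℂ :=
  (c * (b - a) * s + b * (c - a)) / ((b - a) * s + (c - a))

theorem insPoint_sub_insPoint {a b c d s t : ℂ} (ht : (a - d) * t + (b - d) ≠ 0)
    (hs : (b - a) * s + (c - a) ≠ 0) :
    insPoint d a b t - insPoint a b c s =
      (b - a) * ((a - d) * (b - c) * s * t + (b - d) * (a - c) * (s + 1)) /
        (((a - d) * t + (b - d)) * ((b - a) * s + (c - a))) := by
  rw [insPoint, insPoint, div_sub_div _ _ ht hs]
  ring

theorem mul_sq_eq_mul_sq_of_mul_sq_eq {u v w s t : ℂ} (hv : v ≠ 0) (hs : w * s ^ 2 = v)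
    (ht : u * t ^ 2 = v) :
    w * (u * s * t + v * (s + 1)) ^ 2 = u * (w * s * t + v * (t + 1)) ^ 2 := by
  have hX : t * (u * s * t + v * (s + 1)) = v * (s * t + s + t) := by linear_combination s * ht
  have hY : s * (w * s * t + v * (t + 1)) = v * (s * t + s + t) := by linear_combination t * hs
  refine mul_right_cancel₀ hv ?_
  calc w * (u * s * t + v * (s + 1)) ^ 2 * v
      = w * u * (t * (u * s * t + v * (s + 1))) ^ 2 := by rw [← ht]; ring
    _ = u * w * (s * (w * s * t + v * (t + 1))) ^ 2 := by rw [hX, hY]; ring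
    _ = u * (w * s * t + v * (t + 1)) ^ 2 * v := by rw [← hs]; ring

theorem insPoint_harmonic {a b c d s t : ℂ} (hv : (b - d) * (a - c) ≠ 0)
    (hs : (a - b) * (c - d) * s ^ 2 = (b - d) * (a - c))
    (ht : (a - d) * (b - c) * t ^ 2 = (b - d) * (a - c))
    (h₁ : (a - d) * t + (b - d) ≠ 0) (h₂ : (b - a) * s + (c - a) ≠ 0)
    (h₃ : (c - b) * t + (d - b) ≠ 0) (h₄ : (d - c) * s + (a - c) ≠ 0) :
    (insPoint d a b t - insPoint a b c s) * (insPoint b c d t - insPoint c d a s) =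
      -((insPoint a b c s - insPoint b c d t) * (insPoint c d a s - insPoint d a b t)) := by
  have key := mul_sq_eq_mul_sq_of_mul_sq_eq hv hs ht
  rw [insPoint_sub_insPoint h₁ h₂, insPoint_sub_insPoint h₂ h₃, insPoint_sub_insPoint h₃ h₄,
    insPoint_sub_insPoint h₄ h₁]
  generalize (a - d) * t + (b - d) = D₁, (b - a) * s + (c - a) = D₂,
    (c - b) * t + (d - b) = D₃, (d - c) * s + (a - c) = D₄
  linear_combination (D₁ * D₂ * D₃ * D₄)⁻¹ * key

section Geometry

open EuclideanGeometry ComplexConjugate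

attribute [local instance] Complex.finrank_real_complex_fact

noncomputable instance : Module.Oriented ℝ ℂ (Fin 2) := ⟨Complex.orientation⟩

theorem two_zsmul_arg_ofReal_mul {k : ℝ} (hk : k ≠ 0) (z : ℂ) :
    (2 : ℤ) • (arg (k * z) : Real.Angle) = (2 : ℤ) • (arg z : Real.Angle) := by
  rcases eq_or_ne z 0 with rfl | hz
  · simp
  rcases hk.lt_or_gt with hk | hk
  · have : (k : ℂ) * z = -((-k : ℝ) * z) := by push_cast; ring
    rw [this, arg_neg_coe_angle (by simp [hk.ne, hz]), arg_real_mul _ (neg_pos.2 hk), smul_add,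
      Real.Angle.two_zsmul_coe_pi, add_zero]
  · rw [arg_real_mul _ hk]

theorem oangle_eq_arg_conj_mul (z₁ z₂ z₃ : ℂ) : ∡ z₁ z₂ z₃ = arg (conj (z₁ - z₂) * (z₃ - z₂)) :=
  Complex.oangle _ _

theorem cospherical_or_collinear_of_crC_eq_ofReal {z₁ z₂ z₃ z₄ : ℂ} {r : ℝ}
    (h : crC z₁ z₂ z₃ z₄ = r) (hr : r ≠ 0) (h₂₃ : z₂ ≠ z₃) (h₄₁ : z₄ ≠ z₁) :
    Cospherical ({z₁, z₂, z₃, z₄} : Set ℂ) ∨ Collinear ℝ ({z₁, z₂, z₃, z₄} : Set ℂ) := by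
  have hden : (z₂ - z₃) * (z₄ - z₁) ≠ 0 := mul_ne_zero (sub_ne_zero.2 h₂₃) (sub_ne_zero.2 h₄₁)
  have hcross : (z₁ - z₂) * (z₃ - z₄) = r * ((z₂ - z₃) * (z₄ - z₁)) := by
    rw [← h, crC, div_mul_cancel₀ _ hden]
  have h₁₄ : z₁ - z₄ ≠ 0 := sub_ne_zero.2 h₄₁.symm
  have hangle : (2 : ℤ) • ∡ z₁ z₂ z₃ = (2 : ℤ) • ∡ z₁ z₄ z₃ := by
    -- `conj x * y = ‖x‖² * (y / x)`, and the ratios `(z₃ - z₂) / (z₁ - z₂)` and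
    -- `(z₃ - z₄) / (z₁ - z₄)` differ by the real factor `r⁻¹`.
    have hk : normSq (z₁ - z₂) / (normSq (z₁ - z₄) * r) ≠ 0 := by
      have h₁₂ : z₁ - z₂ ≠ 0 := by
        intro h0; apply hr; simpa [h0, hden] using hcross.symm
      exact div_ne_zero (normSq_pos.2 h₁₂).ne' (mul_ne_zero (normSq_pos.2 h₁₄).ne' hr)
    rw [oangle_eq_arg_conj_mul, oangle_eq_arg_conj_mul,
      ← two_zsmul_arg_ofReal_mul hk (conj (z₁ - z₄) * (z₃ - z₄))]
    congr 3
    have : conj (z₁ - z₄) ≠ 0 := (map_ne_zero _).2 h₁₄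
    have : (r : ℂ) ≠ 0 := ofReal_ne_zero.2 hr
    rw [ofReal_div, ofReal_mul, normSq_eq_conj_mul_self, normSq_eq_conj_mul_self]
    field_simp
    linear_combination (-conj (z₁ - z₂)) * hcross
  have := cospherical_or_collinear_of_two_zsmul_oangle_eq hangle
  rwa [Set.pair_comm z₄ z₃] at this

end Geometry

theorem stmt1 (a b c d : ℂ)
    (hab : a ≠ b) (hac : a ≠ c) (had : a ≠ d) (hbc : b ≠ c) (hbd : b ≠ d) (hcd : c ≠ d)
    (pab pbc pcd pda : ℂ)
    (hpab : pab = fIns d a b c) (hpbc : pbc = fIns a b c d)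
    (hpcd : pcd = fIns b c d a) (hpda : pda = fIns c d a b)
    (hden1 : (a - d) * sqrtQ d a b c + (b - d) ≠ 0)
    (hden2 : (b - a) * sqrtQ a b c d + (c - a) ≠ 0)
    (hden3 : (c - b) * sqrtQ b c d a + (d - b) ≠ 0)
    (hden4 : (d - c) * sqrtQ c d a b + (a - c) ≠ 0)
    (h1 : pbc - pcd ≠ 0) (h2 : pda - pab ≠ 0) :
    crC pab pbc pcd pda = -1 ∧
      ((∃ o : ℂ, ∃ r : ℝ, ‖pab - o‖ = r ∧ ‖pbc - o‖ = r ∧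
          ‖pcd - o‖ = r ∧ ‖pda - o‖ = r) ∨
        Collinear ℝ ({pab, pbc, pcd, pda} : Set ℂ)) := by
  rw [sqrtQ_rotate_two] at hden3 hden4
  rw [fIns, sqrtQ_rotate_two] at hpcd hpda
  have hs := mul_sqrtQ_sq hab hcd
  have ht : (a - d) * (b - c) * sqrtQ d a b c ^ 2 = (b - d) * (a - c) := by
    linear_combination -mul_sqrtQ_sq had.symm hbc
  have hharm : (pab - pbc) * (pcd - pda) = -((pbc - pcd) * (pda - pab)) := by
    subst pab pbc pcd pda
    exact insPoint_harmonic (mul_ne_zero (sub_ne_zero.2 hbd) (sub_ne_zero.2 hac)) hs ht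
      hden1 hden2 hden3 hden4
  have hcr : crC pab pbc pcd pda = -1 := by
    rw [crC, hharm, neg_div, div_self (mul_ne_zero h1 h2)]
  refine ⟨hcr, ?_⟩
  rcases cospherical_or_collinear_of_crC_eq_ofReal (r := -1) (by simpa using hcr) (by norm_num)
    (sub_ne_zero.1 h1) (sub_ne_zero.1 h2) with ⟨o, r, hr⟩ | hcol
  · left
    exact ⟨o, r, by simpa [dist_eq_norm] using hr⟩
  · exact Or.inr hcol
end

section
/- With the notation of the point-insertion rule, p_bc · p_da = (abd - abc - bcd + acd)/(a - b - c + d), i.e., the product of the two inserted points f(a,b,c,d) and f(c,d,a,b) equals (abd - abc - bcd + acd)/(a - b - c + d). -/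
open Complex

theorem stmt2 (a b c d : ℂ)
    (hab : a ≠ b) (hac : a ≠ c) (had : a ≠ d) (hbc : b ≠ c) (hbd : b ≠ d) (hcd : c ≠ d)
    (habcd : a - b - c + d ≠ 0)
    (hroot : 1 + sqrtQ a b c d ≠ 0)
    (hden1 : (b - a) * sqrtQ a b c d + (c - a) ≠ 0)
    (hden2 : (d - c) * sqrtQ c d a b + (a - c) ≠ 0) :
    fIns a b c d * fIns c d a b =
      (a * b * d - a * b * c - b * c * d + a * c * d) / (a - b - c + d) := by
  have hsame : sqrtQ c d a b = sqrtQ a b c d := by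
    unfold sqrtQ crC
    congr 1
    ring
  set s := sqrtQ a b c d with hs
  have hden2' : (d - c) * s + (a - c) ≠ 0 := by rwa [hsame] at hden2
  have hsub1 : a - b ≠ 0 := sub_ne_zero.mpr hab
  have hsub2 : d - c ≠ 0 := sub_ne_zero.mpr (Ne.symm hcd)
  have hsub3 : c - a ≠ 0 := sub_ne_zero.mpr (Ne.symm hac)
  have hsub4 : b - d ≠ 0 := sub_ne_zero.mpr hbd
  have hs2 : s ^ 2 * ((a - b) * (d - c)) = (c - a) * (b - d) := by
    have h2 : (2 : ℕ) ≠ 0 := by norm_num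
    have := Complex.cpow_nat_inv_pow (crC c a b d) h2
    have hq : s ^ 2 = crC c a b d := by
      rw [hs]
      unfold sqrtQ
      rw [show ((1 : ℂ) / 2) = ((2 : ℕ) : ℂ)⁻¹ by norm_num]
      exact this
    rw [hq]
    unfold crC
    field_simp
  rw [show fIns a b c d * fIns c d a b =
      ((c * (b - a) * s + b * (c - a)) / ((b - a) * s + (c - a))) *
      ((a * (d - c) * s + d * (a - c)) / ((d - c) * s + (a - c))) by
    unfold fIns; rw [hsame]]
  rw [div_mul_div_comm, div_eq_div_iff (by
      exact mul_ne_zero hden1 hden2') habcd]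
  have key : ((a - b) * (d - c)) *
      ((c * (b - a) * s + b * (c - a)) * (a * (d - c) * s + d * (a - c)) * (a - b - c + d)) =
      ((a - b) * (d - c)) *
      ((a * b * d - a * b * c - b * c * d + a * c * d) *
        (((b - a) * s + (c - a)) * ((d - c) * s + (a - c)))) := by
    linear_combination (a*b^2*c*d - a*b*c*d^2 - a^2*b*c^2 + a*b*c^3 - a^3*c*d + a^2*c^2*d
      + a^3*c^2 - a^2*c^3 - a*b^2*d^2 + a^2*b*d^2 + b^2*c*d^2 - b^2*c^2*d) * hs2
  exact mul_left_cancel₀ (mul_ne_zero hsub1 hsub2) key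
end

section
/- With the notation of the point-insertion rule, p_bc + p_da = (2ad - 2bc)/(a - b - c + d). -/
open Complex

theorem stmt3 (a b c d : ℂ)
    (hab : a ≠ b) (hac : a ≠ c) (had : a ≠ d) (hbc : b ≠ c) (hbd : b ≠ d) (hcd : c ≠ d)
    (habcd : a - b - c + d ≠ 0)
    (hden1 : (b - a) * sqrtQ a b c d + (c - a) ≠ 0)
    (hden2 : (d - c) * sqrtQ c d a b + (a - c) ≠ 0) :
    fIns a b c d + fIns c d a b =
      (2 * a * d - 2 * b * c) / (a - b - c + d) := by
  have hden : (a - b) * (d - c) ≠ 0 :=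
    mul_ne_zero (sub_ne_zero.2 hab) (sub_ne_zero.2 hcd.symm)
  have hsym : sqrtQ c d a b = sqrtQ a b c d := by
    unfold sqrtQ crC
    congr 1
    rw [div_eq_div_iff]
    · ring
    · exact mul_ne_zero (sub_ne_zero.2 hcd) (sub_ne_zero.2 hab.symm)
    · exact hden
  have hq0 : crC c a b d ≠ 0 := by
    unfold crC
    exact div_ne_zero
      (mul_ne_zero (sub_ne_zero.2 hac.symm) (sub_ne_zero.2 hbd)) hden
  set s := sqrtQ a b c d with hs
  have hsq : s ^ 2 = crC c a b d := by
    rw [hs]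
    unfold sqrtQ
    rw [sq, ← Complex.cpow_add _ _ hq0]
    norm_num
  have hsq' : s ^ 2 * ((a - b) * (d - c)) = (c - a) * (b - d) := by
    rw [hsq]
    unfold crC
    exact div_mul_cancel₀ _ hden
  rw [hsym] at hden2
  unfold fIns
  rw [hsym]
  rw [div_add_div _ _ hden1 hden2, div_eq_div_iff (mul_ne_zero hden1 hden2) habcd]
  linear_combination (2 * a * d - 2 * b * c - (a + c) * (a - b - c + d)) * hsq'
end

section
/- The point-insertion rule f is Möbius invariant: for any Möbius transformation M of the extended complex plane and pairwise distinct a,b,c,d, f(M(a),M(b),M(c),M(d)) = M(f(a,b,c,d)). -/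
/-!
A Möbius map `M` multiplies each difference `x - y` by `det M / (j x * j y)`, where
`j z = γ * z + δ`; hence it fixes the cross-ratio and therefore also its square root `s`.
For fixed `s`, `f` is the weighted mean of `c` and `b` with weights `(b - a) * s` and `c - a`.
Applying `M` to a weighted mean of `x, y` with weights `u, v` gives the weighted mean of
`M x, M y` with weights `u * j x, v * j y`, and these are exactly the weights
`(M b - M a) * s`, `M c - M a` up to the common factor `det M / (j a * j b * j c)`.
-/

open Complex

/-- A Möbius transformation of the complex plane. -/
noncomputable def moebius (α β γ δ : ℂ) (z : ℂ) : ℂ := (α * z + β) / (γ * z + δ)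

section

variable {α β γ δ : ℂ}

theorem moebius_sub_moebius {x y : ℂ} (hx : γ * x + δ ≠ 0) (hy : γ * y + δ ≠ 0) :
    moebius α β γ δ x - moebius α β γ δ y =
      (α * δ - β * γ) * (x - y) / ((γ * x + δ) * (γ * y + δ)) := by
  rw [moebius, moebius, div_sub_div _ _ hx hy]
  ring

theorem moebius_div (N : ℂ) {D : ℂ} (hD : D ≠ 0) :
    moebius α β γ δ (N / D) = (α * N + β * D) / (γ * N + δ * D) := by
  rw [moebius, ← mul_div_mul_right _ _ hD]
  field_simp

theorem crC_moebius (hM : α * δ - β * γ ≠ 0) {a b c d : ℂ} (ha : γ * a + δ ≠ 0)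
    (hb : γ * b + δ ≠ 0) (hc : γ * c + δ ≠ 0) (hd : γ * d + δ ≠ 0) :
    crC (moebius α β γ δ a) (moebius α β γ δ b) (moebius α β γ δ c) (moebius α β γ δ d) =
      crC a b c d := by
  rw [crC, crC, moebius_sub_moebius ha hb, moebius_sub_moebius hc hd,
    moebius_sub_moebius hb hc, moebius_sub_moebius hd ha]
  field_simp

theorem sqrtQ_moebius (hM : α * δ - β * γ ≠ 0) {a b c d : ℂ} (ha : γ * a + δ ≠ 0)
    (hb : γ * b + δ ≠ 0) (hc : γ * c + δ ≠ 0) (hd : γ * d + δ ≠ 0) :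
    sqrtQ (moebius α β γ δ a) (moebius α β γ δ b) (moebius α β γ δ c) (moebius α β γ δ d) =
      sqrtQ a b c d := by
  rw [sqrtQ, sqrtQ, crC_moebius hM hc ha hb hd]


noncomputable def insertRule (s a b c : ℂ) : ℂ :=
  (c * (b - a) * s + b * (c - a)) / ((b - a) * s + (c - a))

theorem fIns_eq_insertRule (a b c d : ℂ) : fIns a b c d = insertRule (sqrtQ a b c d) a b c :=
  rfl

theorem insertRule_moebius (hM : α * δ - β * γ ≠ 0) (s : ℂ) {a b c : ℂ}
    (ha : γ * a + δ ≠ 0) (hb : γ * b + δ ≠ 0) (hc : γ * c + δ ≠ 0)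
    (hD : (b - a) * s + (c - a) ≠ 0) (hf : γ * insertRule s a b c + δ ≠ 0) :
    insertRule s (moebius α β γ δ a) (moebius α β γ δ b) (moebius α β γ δ c) =
      moebius α β γ δ (insertRule s a b c) := by
  set N := c * (b - a) * s + b * (c - a)
  set D := (b - a) * s + (c - a)
  -- the common factor by which `M` rescales both weights `(b - a) * s` and `c - a`
  set K := (α * δ - β * γ) / ((γ * a + δ) * (γ * b + δ) * (γ * c + δ))
  have hK : K ≠ 0 := by simp [K, hM, ha, hb, hc]
  have hQ : γ * N + δ * D ≠ 0 := by
    rw [show γ * N + δ * D = (γ * (N / D) + δ) * D by field_simp]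
    exact mul_ne_zero hf hD
  have hnum : moebius α β γ δ c * (moebius α β γ δ b - moebius α β γ δ a) * s +
      moebius α β γ δ b * (moebius α β γ δ c - moebius α β γ δ a) = K * (α * N + β * D) := by
    rw [moebius_sub_moebius hb ha, moebius_sub_moebius hc ha, moebius, moebius]
    simp only [K, N, D]
    field_simp
    ring
  have hden : (moebius α β γ δ b - moebius α β γ δ a) * s +
      (moebius α β γ δ c - moebius α β γ δ a) = K * (γ * N + δ * D) := by
    rw [moebius_sub_moebius hb ha, moebius_sub_moebius hc ha]
    simp only [K, N, D]
    field_simp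
    ring
  rw [insertRule, hnum, hden, mul_div_mul_left _ _ hK, insertRule, moebius_div _ hD]

end

theorem stmt5_general (α β γ δ : ℂ) (hM : α * δ - β * γ ≠ 0)
    (a b c d : ℂ)
    (hMa : γ * a + δ ≠ 0) (hMb : γ * b + δ ≠ 0) (hMc : γ * c + δ ≠ 0) (hMd : γ * d + δ ≠ 0)
    (hMf : γ * fIns a b c d + δ ≠ 0)
    (hden : (b - a) * sqrtQ a b c d + (c - a) ≠ 0) :
    fIns (moebius α β γ δ a) (moebius α β γ δ b) (moebius α β γ δ c) (moebius α β γ δ d) =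
      moebius α β γ δ (fIns a b c d) := by
  rw [fIns_eq_insertRule, fIns_eq_insertRule, sqrtQ_moebius hM hMa hMb hMc hMd]
  exact insertRule_moebius hM _ hMa hMb hMc hden hMf

theorem stmt5 (α β γ δ : ℂ) (hM : α * δ - β * γ ≠ 0)
    (a b c d : ℂ)
    (hab : a ≠ b) (hac : a ≠ c) (had : a ≠ d) (hbc : b ≠ c) (hbd : b ≠ d) (hcd : c ≠ d)
    (hMa : γ * a + δ ≠ 0) (hMb : γ * b + δ ≠ 0) (hMc : γ * c + δ ≠ 0) (hMd : γ * d + δ ≠ 0)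
    (hMf : γ * fIns a b c d + δ ≠ 0)
    (hden : (b - a) * sqrtQ a b c d + (c - a) ≠ 0)
    (hden' : (moebius α β γ δ b - moebius α β γ δ a) *
        sqrtQ (moebius α β γ δ a) (moebius α β γ δ b) (moebius α β γ δ c) (moebius α β γ δ d) +
        (moebius α β γ δ c - moebius α β γ δ a) ≠ 0) :
    fIns (moebius α β γ δ a) (moebius α β γ δ b) (moebius α β γ δ c) (moebius α β γ δ d) =
      moebius α β γ δ (fIns a b c d) :=
  stmt5_general α β γ δ hM a b c d hMa hMb hMc hMd hMf hden
end

section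
/- Let s: ℝ → ℂ be a smooth curve with s'(u) ≠ 0 and s''(u) ≠ 0 and nonzero curvature κ(u) at u. Then the point s̃(u) := s(u) - 2 s'(u)²/s''(u) lies on the curvature circle of s at u, i.e., |s̃(u) - (s(u) + N(u)/κ(u))| = 1/|κ(u)|, where κ = Im(conj(s')·s'')/|s'|³ is the signed curvature (equivalently κ = (i/2)(s'·conj(s'') - conj(s')·s'')/|s'|³) and N = i·s'/|s'| is the unit normal. -/
/-!
With `a = s'(u)`, `b = s''(u)` and `D = a b̄ - ā b` (so that `κ = i D / (2|a|³)`), the radius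
vector of the curvature circle is `N / κ = 2 a² ā / D`. Since `D + ā b = a b̄`, the point
`s̃ - (s + N/κ) = -2a²/b - 2a²ā/D` simplifies to `-2 a³ b̄ / (b D)`, whose modulus is
`2|a|³ / |D| = 1/|κ|`.
-/

open Complex ComplexConjugate

namespace CurvatureCircle

noncomputable def signedCurvature (a b : ℂ) : ℂ :=
  I * (a * conj b - conj a * b) / (2 * (‖a‖ : ℂ) ^ 3)

noncomputable def unitNormal (a : ℂ) : ℂ :=
  I * a / (‖a‖ : ℂ)

variable {a b : ℂ}

lemma ne_zero_of_mul_conj_sub_conj_mul_ne_zero (hD : a * conj b - conj a * b ≠ 0) :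
    a ≠ 0 ∧ b ≠ 0 := by
  constructor <;> rintro rfl <;> simp at hD

lemma norm_signedCurvature (a b : ℂ) :
    ‖signedCurvature a b‖ = ‖a * conj b - conj a * b‖ / (2 * ‖a‖ ^ 3) := by
  simp [signedCurvature]

lemma unitNormal_div_signedCurvature (hD : a * conj b - conj a * b ≠ 0) :
    unitNormal a / signedCurvature a b = 2 * a ^ 2 * conj a / (a * conj b - conj a * b) := by
  have ha : (‖a‖ : ℂ) ≠ 0 := by
    exact_mod_cast norm_ne_zero_iff.mpr (ne_zero_of_mul_conj_sub_conj_mul_ne_zero hD).1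
  have hcube : (‖a‖ : ℂ) ^ 3 = ‖a‖ * (a * conj a) := by rw [mul_conj']; ring
  rw [unitNormal, signedCurvature, hcube]
  field_simp

lemma sub_curvatureCenter_eq (z : ℂ) (hD : a * conj b - conj a * b ≠ 0) :
    (z - 2 * a ^ 2 / b) - (z + unitNormal a / signedCurvature a b) =
      -(2 * a ^ 3 * conj b) / (b * (a * conj b - conj a * b)) := by
  have hb := (ne_zero_of_mul_conj_sub_conj_mul_ne_zero hD).2
  rw [unitNormal_div_signedCurvature hD]
  generalize hDdef : a * conj b - conj a * b = D at hD ⊢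
  field_simp
  linear_combination 2 * a ^ 2 * hDdef

theorem norm_sub_curvatureCenter (z : ℂ) (hD : a * conj b - conj a * b ≠ 0) :
    ‖(z - 2 * a ^ 2 / b) - (z + unitNormal a / signedCurvature a b)‖ =
      1 / ‖signedCurvature a b‖ := by
  have hb : ‖b‖ ≠ 0 := norm_ne_zero_iff.mpr (ne_zero_of_mul_conj_sub_conj_mul_ne_zero hD).2
  rw [sub_curvatureCenter_eq z hD, norm_signedCurvature]
  simp only [norm_div, norm_neg, norm_mul, norm_pow, norm_conj, Complex.norm_two]
  field_simp

end CurvatureCircle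

theorem stmt6_general (s : ℝ → ℂ) (u : ℝ)
    (hκ : deriv s u * (starRingEnd ℂ) (deriv (deriv s) u) -
        (starRingEnd ℂ) (deriv s u) * deriv (deriv s) u ≠ 0) :
    let s₀ := s u
    let s₁ := deriv s u
    let s₂ := deriv (deriv s) u
    let κ : ℂ := Complex.I * (s₁ * (starRingEnd ℂ) s₂ - (starRingEnd ℂ) s₁ * s₂) /
      (2 * (‖s₁‖ : ℂ) ^ 3)
    let N : ℂ := Complex.I * s₁ / (‖s₁‖ : ℂ)
    ‖(s₀ - 2 * s₁ ^ 2 / s₂) - (s₀ + N / κ)‖ = 1 / ‖κ‖ := by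
  intro s₀ s₁ s₂ κ N
  exact CurvatureCircle.norm_sub_curvatureCenter s₀ hκ

theorem stmt6 (s : ℝ → ℂ) (u : ℝ) (hs : ContDiff ℝ 2 s)
    (h1 : deriv s u ≠ 0) (h2 : deriv (deriv s) u ≠ 0)
    (hκ : deriv s u * (starRingEnd ℂ) (deriv (deriv s) u) -
        (starRingEnd ℂ) (deriv s u) * deriv (deriv s) u ≠ 0) :
    let s₀ := s u
    let s₁ := deriv s u
    let s₂ := deriv (deriv s) u
    let κ : ℂ := Complex.I * (s₁ * (starRingEnd ℂ) s₂ - (starRingEnd ℂ) s₁ * s₂) /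
      (2 * (‖s₁‖ : ℂ) ^ 3)
    let N : ℂ := Complex.I * s₁ / (‖s₁‖ : ℂ)
    ‖(s₀ - 2 * s₁ ^ 2 / s₂) - (s₀ + N / κ)‖ = 1 / ‖κ‖ :=
  stmt6_general s u hκ
end

section
/- For three distinct points a, b, c ∈ ℝⁿ, the vector (a-b)‖a-c‖² - (a-c)‖a-b‖² is tangent at a to the circumcircle of the triangle abc, i.e., it is orthogonal to the vector from a to the circumcenter of a, b, c. -/
open RealInnerProductSpace

theorem real_inner_sub_sub_of_norm_sub_eq {E : Type*} [NormedAddCommGroup E]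
    [InnerProductSpace ℝ E] {a b m : E} (h : ‖m - a‖ = ‖m - b‖) :
    ⟪a - b, m - a⟫ = -(‖a - b‖ ^ 2 / 2) := by
  have hsq := norm_add_sq_real (m - a) (a - b)
  rw [sub_add_sub_cancel, ← h, real_inner_comm] at hsq
  linarith

theorem stmt9_general (n : ℕ) (a b c m : EuclideanSpace ℝ (Fin n))
    (hmb : ‖m - a‖ = ‖m - b‖) (hmc : ‖m - a‖ = ‖m - c‖) :
    inner ℝ ((‖a - c‖ ^ 2 : ℝ) • (a - b) - (‖a - b‖ ^ 2 : ℝ) • (a - c)) (m - a) = (0 : ℝ) := by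
  rw [inner_sub_left, real_inner_smul_left, real_inner_smul_left,
    real_inner_sub_sub_of_norm_sub_eq hmb, real_inner_sub_sub_of_norm_sub_eq hmc]
  ring

theorem stmt9 (n : ℕ) (a b c m : EuclideanSpace ℝ (Fin n))
    (hab : a ≠ b) (hac : a ≠ c) (hbc : b ≠ c)
    (hcol : ¬ Collinear ℝ ({a, b, c} : Set (EuclideanSpace ℝ (Fin n))))
    (hm : m ∈ affineSpan ℝ ({a, b, c} : Set (EuclideanSpace ℝ (Fin n))))
    (hmb : ‖m - a‖ = ‖m - b‖) (hmc : ‖m - a‖ = ‖m - c‖) :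
    inner ℝ ((‖a - c‖ ^ 2 : ℝ) • (a - b) - (‖a - b‖ ^ 2 : ℝ) • (a - c)) (m - a) = (0 : ℝ) :=
  stmt9_general n a b c m hmb hmc
end

section
/- Let a, b, c, d be four points in ℝ³ (as purely imaginary quaternions) not lying on a common circle or line, with quaternionic cross-ratio cr(a,b,c,d) = [r, v]. If f is a purely imaginary quaternion with cr(a,b,c,f) = [λr, μv] for some reals λ, μ, and m is the center of the circumsphere of a,b,c,d, then f lies on that circumsphere, i.e., ‖f - m‖ equals the circumradius. -/
open Quaternion

/-- Quaternionic cross-ratio. -/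
noncomputable def crH (a b c d : ℍ[ℝ]) : ℍ[ℝ] := (a - b) * (b - c)⁻¹ * (c - d) * (d - a)⁻¹

/-!
The cross-ratio is an affine function of the inversion `(x - a)⁻¹`, with a quaternionic
coefficient on the left: `crH a b c x = K * ((x - a)⁻¹ - (c - a)⁻¹)`. The hypothesis says that
`crH a b c f` is a real affine combination of `crH a b c b = 1`, `crH a b c c = 0` and
`crH a b c d`; real scalars are central, so `(f - a)⁻¹` is the same affine combination of
`(b - a)⁻¹`, `(c - a)⁻¹`, `(d - a)⁻¹`. Inversion at `a` maps the sphere through `a` with centre `m`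
into the hyperplane `2 Re (z * (m - a)) = 1`, which contains real affine combinations of its points.
-/

theorem Quaternion.norm_sub_eq_norm_iff_re_inv_mul {u p : ℍ[ℝ]} (hu : u ≠ 0) :
    ‖u - p‖ = ‖p‖ ↔ 2 * (u⁻¹ * p).re = 1 := by
  have hnu : normSq u ≠ 0 := normSq_ne_zero.2 hu
  have hre : (u⁻¹ * p).re = (normSq u)⁻¹ * (star u * p).re := by
    rw [inv_def, smul_mul_assoc, re_smul, smul_eq_mul]
  have hsq : normSq (u - p) = normSq p + (normSq u - 2 * (star u * p).re) := by
    simp only [normSq_def', re_sub, imI_sub, imJ_sub, imK_sub, re_mul, re_star, imI_star,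
      imJ_star, imK_star]
    ring
  rw [← sq_eq_sq₀ (norm_nonneg _) (norm_nonneg _), sq, sq, ← normSq_eq_norm_mul_self,
    ← normSq_eq_norm_mul_self, hsq, add_eq_left, sub_eq_zero, hre, mul_left_comm,
    inv_mul_eq_one₀ hnu]

theorem Quaternion.eq_coe_add_smul_of_re_of_im {q r : ℍ[ℝ]} {lam mu : ℝ}
    (hre : q.re = lam * r.re) (him : q.im = mu • r.im) :
    q = ((lam - mu) * r.re : ℝ) + mu • r := by
  have him' : q.im = mu • (r - r.re) := by rw [him, ← eq_sub_of_add_eq' (re_add_im r)]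
  rw [← re_add_im q, hre, him', smul_sub, smul_coe, sub_mul, coe_sub]
  abel

theorem sub_mul_inv_sub_eq_mul_inv_sub_sub_inv {D : Type*} [DivisionRing D] {a c x : D}
    (hxa : x ≠ a) (hca : c ≠ a) :
    (c - x) * (x - a)⁻¹ = (c - a) * ((x - a)⁻¹ - (c - a)⁻¹) := by
  rw [mul_sub, mul_inv_cancel₀ (sub_ne_zero.2 hca), ← sub_sub_sub_cancel_right c x a, sub_mul,
    mul_inv_cancel₀ (sub_ne_zero.2 hxa)]

theorem crH_eq_mul_inv_sub_sub_inv {a b c x : ℍ[ℝ]} (hxa : x ≠ a) (hca : c ≠ a) :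
    crH a b c x = (a - b) * (b - c)⁻¹ * (c - a) * ((x - a)⁻¹ - (c - a)⁻¹) := by
  rw [crH, mul_assoc _ (c - x), sub_mul_inv_sub_eq_mul_inv_sub_sub_inv hxa hca]
  simp only [mul_assoc]

theorem crH_second_eq_one {a b c : ℍ[ℝ]} (hab : a ≠ b) (hbc : b ≠ c) : crH a b c b = 1 := by
  rw [crH, mul_assoc (a - b), ← neg_sub b c, mul_neg, inv_mul_cancel₀ (sub_ne_zero.2 hbc),
    mul_neg_one, ← neg_sub b a, neg_mul, ← mul_neg, ← inv_neg, neg_sub,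
    mul_inv_cancel₀ (sub_ne_zero.2 hab)]

theorem inv_sub_eq_of_crH_eq {a b c d f : ℍ[ℝ]} (hab : a ≠ b) (hac : a ≠ c) (had : a ≠ d)
    (hbc : b ≠ c) (hfa : f ≠ a) {s μ : ℝ} (h : crH a b c f = s + μ • crH a b c d) :
    (f - a)⁻¹ = s • (b - a)⁻¹ + μ • (d - a)⁻¹ + (1 - s - μ) • (c - a)⁻¹ := by
  set K := (a - b) * (b - c)⁻¹ * (c - a)
  have hK : K ≠ 0 := by simp [K, sub_ne_zero, hab, hbc, hac.symm]
  have hinv (x : ℍ[ℝ]) (hxa : x ≠ a) : (x - a)⁻¹ = K⁻¹ * crH a b c x + (c - a)⁻¹ := by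
    rw [crH_eq_mul_inv_sub_sub_inv hxa hac.symm, inv_mul_cancel_left₀ hK, sub_add_cancel]
  rw [hinv f hfa, hinv b hab.symm, hinv d had.symm, h, crH_second_eq_one hab hbc, mul_add,
    mul_coe_eq_smul, mul_smul_comm, mul_one]
  module

theorem stmt13_general (a b c d f m : ℍ[ℝ]) (R : ℝ)
    (hab : a ≠ b) (hac : a ≠ c) (had : a ≠ d) (hbc : b ≠ c)
    (lam mu : ℝ)
    (hcrf : (crH a b c f).re = lam * (crH a b c d).re ∧
      (crH a b c f).im = mu • (crH a b c d).im)
    (hma : ‖a - m‖ = R) (hmb : ‖b - m‖ = R) (hmc : ‖c - m‖ = R) (hmd : ‖d - m‖ = R) :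
    ‖f - m‖ = R := by
  subst hma
  rcases eq_or_ne f a with rfl | hfa
  · rfl
  have hsphere (x : ℍ[ℝ]) (hxa : x ≠ a) :
      ‖x - m‖ = ‖a - m‖ ↔ 2 * ((x - a)⁻¹ * (m - a)).re = 1 := by
    rw [← norm_sub_eq_norm_iff_re_inv_mul (sub_ne_zero.2 hxa), sub_sub_sub_cancel_right,
      norm_sub_rev m a]
  rw [hsphere b hab.symm] at hmb
  rw [hsphere c hac.symm] at hmc
  rw [hsphere d had.symm] at hmd
  rw [hsphere f hfa,
    inv_sub_eq_of_crH_eq hab hac had hbc hfa (eq_coe_add_smul_of_re_of_im hcrf.1 hcrf.2)]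
  simp only [add_mul, smul_mul_assoc, re_add, re_smul, smul_eq_mul]
  set s := (lam - mu) * (crH a b c d).re
  linear_combination s * hmb + mu * hmd + (1 - s - mu) * hmc

theorem stmt13 (a b c d f m : ℍ[ℝ]) (R : ℝ) (hR : 0 < R)
    (ha : a.re = 0) (hb : b.re = 0) (hc : c.re = 0) (hd : d.re = 0)
    (hf : f.re = 0) (hm : m.re = 0)
    (hab : a ≠ b) (hac : a ≠ c) (had : a ≠ d) (hbc : b ≠ c) (hbd : b ≠ d) (hcd : c ≠ d)
    (haff : ∀ α β γ δ : ℝ, α • a + β • b + γ • c + δ • d = 0 →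
      α + β + γ + δ = 0 → α = 0 ∧ β = 0 ∧ γ = 0 ∧ δ = 0)
    (hncyc : (crH a b c d).im ≠ 0)
    (lam mu : ℝ)
    (hcrf : (crH a b c f).re = lam * (crH a b c d).re ∧
      (crH a b c f).im = mu • (crH a b c d).im)
    (hma : ‖a - m‖ = R) (hmb : ‖b - m‖ = R) (hmc : ‖c - m‖ = R) (hmd : ‖d - m‖ = R) :
    ‖f - m‖ = R :=
  stmt13_general a b c d f m R hab hac had hbc lam mu hcrf hma hmb hmc hmd
end

section
/- For four points in ℝ³ ≅ Im ℍ with a,b,c,d affinely independent (unique circumsphere with center m), the imaginary part of the quaternionic cross-ratio cr(a,b,c,d) = (a-b)(b-c)⁻¹(c-d)(d-a)⁻¹ is parallel to m - a. -/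
/-!
If `p * p = q * q` in a ring, then `(p - q) * q = -p * (p - q)` and `(p - q) * p = -q * (p - q)`.
The vectors `a - m, b - m, c - m, d - m` are pure imaginary of the same norm, hence have equal
squares, so each factor of the cross ratio moves one vertex to the next (up to sign) and the whole
cross ratio commutes with `a - m`. Since `u * q - q * u = 2 (Im u × Im q)`, this means that
`Im cr(a, b, c, d)` is parallel to `m - a`.
-/

open Quaternion

theorem semiconjBy_sub_of_mul_self_eq {R : Type*} [Ring R] {p q : R} (h : p * p = q * q) :
    SemiconjBy (p - q) q (-p) := by
  simp only [SemiconjBy, sub_mul, mul_sub, neg_mul, h]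
  abel

theorem semiconjBy_sub_mul_inv_sub {K : Type*} [DivisionRing K] {p q r : K}
    (hpq : p * p = q * q) (hqr : q * q = r * r) :
    SemiconjBy ((p - q) * (q - r)⁻¹) r p := by
  have hq : SemiconjBy (q - r) q (-r) := by
    simpa only [neg_sub] using (semiconjBy_sub_of_mul_self_eq hqr.symm).neg_left
  exact SemiconjBy.neg_right_iff.1 <|
    (semiconjBy_sub_of_mul_self_eq hpq).mul_left hq.inv_symm_left₀

theorem commute_sub_mul_inv_sub_mul_sub_mul_inv_sub {K : Type*} [DivisionRing K]
    {p q r s : K} (hpq : p * p = q * q) (hqr : q * q = r * r) (hrs : r * r = s * s) :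
    Commute p ((p - q) * (q - r)⁻¹ * (r - s) * (s - p)⁻¹) := by
  rw [mul_assoc _ (r - s)]
  exact Commute.symm <| (semiconjBy_sub_mul_inv_sub hpq hqr).mul_left
    (semiconjBy_sub_mul_inv_sub hrs (hpq.trans (hqr.trans hrs)).symm)

theorem crH_sub_right (a b c d m : ℍ[ℝ]) :
    crH (a - m) (b - m) (c - m) (d - m) = crH a b c d := by
  simp only [crH, sub_sub_sub_cancel_right]

theorem Quaternion.mul_self_eq_neg_norm_sq {x : ℍ[ℝ]} (hx : x.re = 0) :
    x * x = -((‖x‖ ^ 2 : ℝ) : ℍ[ℝ]) := by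
  rw [← sq, sq_eq_neg_normSq.2 hx, normSq_eq_norm_mul_self, sq]

theorem Quaternion.cross_eq_zero_of_commute {u q : ℍ[ℝ]} (h : Commute u q) :
    q.imJ * u.imK - q.imK * u.imJ = 0 ∧
    q.imK * u.imI - q.imI * u.imK = 0 ∧
    q.imI * u.imJ - q.imJ * u.imI = 0 := by
  have hI := congrArg (·.imI) h.eq
  have hJ := congrArg (·.imJ) h.eq
  have hK := congrArg (·.imK) h.eq
  simp only [imI_mul, imJ_mul, imK_mul] at hI hJ hK
  refine ⟨?_, ?_, ?_⟩ <;> linarith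

theorem stmt14_general (a b c d m : ℍ[ℝ]) (R : ℝ)
    (ha : a.re = 0) (hb : b.re = 0) (hc : c.re = 0) (hd : d.re = 0) (hm : m.re = 0)
    (hma : ‖a - m‖ = R) (hmb : ‖b - m‖ = R) (hmc : ‖c - m‖ = R) (hmd : ‖d - m‖ = R) :
    let v := (crH a b c d).im
    let w := m - a
    v.imJ * w.imK - v.imK * w.imJ = 0 ∧
    v.imK * w.imI - v.imI * w.imK = 0 ∧
    v.imI * w.imJ - v.imJ * w.imI = 0 := by
  intro v w
  have hsq : ∀ x : ℍ[ℝ], x.re = 0 → ‖x - m‖ = R → (x - m) * (x - m) = -((R ^ 2 : ℝ) : ℍ[ℝ]) :=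
    fun x hx hxm => by rw [mul_self_eq_neg_norm_sq (by rw [re_sub, hx, hm, sub_zero]), hxm]
  have hcomm : Commute (a - m) (crH a b c d) := by
    rw [← crH_sub_right a b c d m]
    exact commute_sub_mul_inv_sub_mul_sub_mul_inv_sub
      (by rw [hsq a ha hma, hsq b hb hmb]) (by rw [hsq b hb hmb, hsq c hc hmc])
      (by rw [hsq c hc hmc, hsq d hd hmd])
  simpa only [v, w, neg_sub, imI_im, imJ_im, imK_im] using
    cross_eq_zero_of_commute hcomm.neg_left

theorem stmt14 (a b c d m : ℍ[ℝ]) (R : ℝ) (hR : 0 < R)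
    (ha : a.re = 0) (hb : b.re = 0) (hc : c.re = 0) (hd : d.re = 0) (hm : m.re = 0)
    (hab : a ≠ b) (hac : a ≠ c) (had : a ≠ d) (hbc : b ≠ c) (hbd : b ≠ d) (hcd : c ≠ d)
    (haff : ∀ α β γ δ : ℝ, α • a + β • b + γ • c + δ • d = 0 →
      α + β + γ + δ = 0 → α = 0 ∧ β = 0 ∧ γ = 0 ∧ δ = 0)
    (hma : ‖a - m‖ = R) (hmb : ‖b - m‖ = R) (hmc : ‖c - m‖ = R) (hmd : ‖d - m‖ = R) :
    let v := (crH a b c d).im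
    let w := m - a
    v.imJ * w.imK - v.imK * w.imJ = 0 ∧
    v.imK * w.imI - v.imI * w.imK = 0 ∧
    v.imI * w.imJ - v.imJ * w.imI = 0 :=
  stmt14_general a b c d m R ha hb hc hd hm hma hmb hmc hmd
end

section
/- For a parallelogram a, b, c, d in ℂ with b - a = c - d (i.e., d = a + c - b), the four inserted points p_ab = f(d,a,b,c), p_bc = f(a,b,c,d), p_cd = f(b,c,d,a), p_da = f(c,d,a,b) satisfy the central symmetry p_ab + p_cd = p_bc + p_da = a + c = b + d, i.e., p_ab and p_cd are symmetric about the parallelogram's center (a+c)/2, as are p_bc and p_da. -/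
open Complex

/-! The rule `fIns` commutes with every affine map `z ↦ α z + β`, because the cross-ratio is
affinely invariant. The point reflection `z ↦ a + c - z` in the centre of the parallelogram
permutes its vertices as `(a, b, c, d) ↦ (c, d, a, b)`, so it carries each inserted point to the
one on the opposite side. -/

theorem crC_affine {α : ℂ} (hα : α ≠ 0) (β a b c d : ℂ) :
    crC (α * a + β) (α * b + β) (α * c + β) (α * d + β) = crC a b c d := by
  have hα2 : α ^ 2 ≠ 0 := pow_ne_zero 2 hα
  calc crC (α * a + β) (α * b + β) (α * c + β) (α * d + β)
      = (α ^ 2 * ((a - b) * (c - d))) / (α ^ 2 * ((b - c) * (d - a))) := by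
        unfold crC; congr 1 <;> ring
    _ = crC a b c d := mul_div_mul_left _ _ hα2

theorem sqrtQ_affine {α : ℂ} (hα : α ≠ 0) (β a b c d : ℂ) :
    sqrtQ (α * a + β) (α * b + β) (α * c + β) (α * d + β) = sqrtQ a b c d := by
  rw [sqrtQ, crC_affine hα, sqrtQ]

theorem fIns_affine {α : ℂ} (hα : α ≠ 0) (β : ℂ) {a b c d : ℂ}
    (hden : (b - a) * sqrtQ a b c d + (c - a) ≠ 0) :
    fIns (α * a + β) (α * b + β) (α * c + β) (α * d + β) = α * fIns a b c d + β := by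
  rw [fIns, fIns, sqrtQ_affine hα]
  set s := sqrtQ a b c d
  set N := c * (b - a) * s + b * (c - a)
  set D := (b - a) * s + (c - a)
  calc _ = (α * (α * N + β * D)) / (α * D) := by congr 1 <;> ring
    _ = α * (N / D) + β := by
      rw [mul_div_mul_left _ _ hα, add_div, mul_div_assoc, mul_div_cancel_right₀ _ hden]

theorem fIns_const_sub (m : ℂ) {a b c d : ℂ}
    (hden : (b - a) * sqrtQ a b c d + (c - a) ≠ 0) :
    fIns (m - a) (m - b) (m - c) (m - d) = m - fIns a b c d := by
  simpa only [neg_one_mul, neg_add_eq_sub] using fIns_affine (neg_ne_zero.mpr one_ne_zero) m hden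

theorem stmt19_general (a b c d : ℂ)
    (hpar : b - a = c - d)
    (hden1 : (a - d) * sqrtQ d a b c + (b - d) ≠ 0)
    (hden2 : (b - a) * sqrtQ a b c d + (c - a) ≠ 0) :
    fIns d a b c + fIns b c d a = a + c ∧ fIns a b c d + fIns c d a b = a + c := by
  have hd : a + c - b = d := by linear_combination -hpar
  have hb : a + c - d = b := by linear_combination -hpar
  have reflect_da := fIns_const_sub (a + c) hden1
  have reflect_ab := fIns_const_sub (a + c) hden2
  rw [hb, add_sub_cancel_right, add_sub_cancel_left, hd] at reflect_da
  rw [add_sub_cancel_right, hd, add_sub_cancel_left, hb] at reflect_ab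
  constructor
  · rw [reflect_da]; ring
  · rw [reflect_ab]; ring

theorem stmt19 (a b c d : ℂ)
    (hpar : b - a = c - d)
    (hab : a ≠ b) (hac : a ≠ c) (had : a ≠ d) (hbc : b ≠ c) (hbd : b ≠ d) (hcd : c ≠ d)
    (hden1 : (a - d) * sqrtQ d a b c + (b - d) ≠ 0)
    (hden2 : (b - a) * sqrtQ a b c d + (c - a) ≠ 0)
    (hden3 : (c - b) * sqrtQ b c d a + (d - b) ≠ 0)
    (hden4 : (d - c) * sqrtQ c d a b + (a - c) ≠ 0) :
    fIns d a b c + fIns b c d a = a + c ∧ fIns a b c d + fIns c d a b = a + c :=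
  stmt19_general a b c d hpar hden1 hden2
end
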